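/- arXiv:2512.00286 — 3 statements merged into one kernel-verified Lean document; each statement's English description precedes it below -/
import Mathlib

section
/- Let (H, B) be a Rota–Baxter Hopf algebra of weight −1. Then the linear map B̃ : H → H defined by B̃(x) = x₁ B(S(x₂)) is again a Rota–Baxter operator of weight −1 on H; that is, B̃ is a coalgebra map and B̃(x)B̃(y) = B̃(B̃(x₁) y S(B̃(x₂)) x₃) for all x, y ∈ H. -/
open TensorProduct LinearMap

noncomputable section

universe u

variable {K H : Type u} [Field K] [CharZero K] [Ring H] [HopfAlgebra K H]

/-- The antipode of `H` as a `K`-linear map. -/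
def aS (K H : Type u) [Field K] [Ring H] [HopfAlgebra K H] : H →ₗ[K] H :=
  HopfAlgebra.antipode K

/-- Convolution-type composite: `conv f g x = f x₁ * g x₂` in Sweedler notation,
where the source may be any coalgebra `C`. -/
def conv {C : Type u} [AddCommGroup C] [Module K C] [Coalgebra K C]
    (f g : C →ₗ[K] H) : C →ₗ[K] H :=
  LinearMap.mul' K H ∘ₗ TensorProduct.map f g ∘ₗ Coalgebra.comul

/-- `wrap f g h (a ⊗ₜ c) = f a₁ * (g c * h a₂)` in Sweedler notation. -/
def wrap {C : Type u} [AddCommGroup C] [Module K C] [Coalgebra K C]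
    (f : C →ₗ[K] H) (g : H →ₗ[K] H) (h : C →ₗ[K] H) : C ⊗[K] H →ₗ[K] H :=
  LinearMap.mul' K H ∘ₗ
    TensorProduct.map f
      (LinearMap.mul' K H ∘ₗ TensorProduct.map g h ∘ₗ (TensorProduct.comm K C H).toLinearMap) ∘ₗ
    (TensorProduct.assoc K C C H).toLinearMap ∘ₗ
    TensorProduct.map Coalgebra.comul LinearMap.id

/-- The descendent product: `mulB B (x ⊗ₜ y) = B x₁ * (y * (S (B x₂) * x₃))`,
i.e. `x *_B y = B(x₁) y S(B(x₂)) x₃` in Sweedler notation. -/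
def mulB (B : H →ₗ[K] H) : H ⊗[K] H →ₗ[K] H :=
  wrap B LinearMap.id (conv (aS K H ∘ₗ B) LinearMap.id)

/-- `Bt B x = x₁ * B (S x₂)`, i.e. the operator `B̃`. -/
def Bt (B : H →ₗ[K] H) : H →ₗ[K] H := conv LinearMap.id (B ∘ₗ aS K H)

/-- `SB B x = S(B x₁) * (S x₂ * B x₃)`, the antipode `S_B` of the descendent Hopf algebra. -/
def SB (B : H →ₗ[K] H) : H →ₗ[K] H := conv (aS K H ∘ₗ B) (conv (aS K H) B)

/-- `H` is cocommutative. -/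
def IsCocomm (K H : Type u) [Field K] [Ring H] [HopfAlgebra K H] : Prop :=
  ∀ x : H, (TensorProduct.comm K H H) (Coalgebra.comul x) = Coalgebra.comul x

/-- `B` is a Rota–Baxter operator of weight `-1` on `H`: it is a coalgebra map and
`B x * B y = B (B(x₁) y S(B(x₂)) x₃)` in Sweedler notation. -/
def IsRotaBaxter (B : H →ₗ[K] H) : Prop :=
  (Coalgebra.comul ∘ₗ B = TensorProduct.map B B ∘ₗ Coalgebra.comul) ∧
  (Coalgebra.counit ∘ₗ B = Coalgebra.counit) ∧
  ∀ x y : H, B x * B y = B (mulB B (x ⊗ₜ[K] y))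

/-!
Write `β = B ∘ S`, so that `B̃ = id * β` in the convolution algebra of linear maps `H → H`. As `H`
is cocommutative, `S` is an involutive coalgebra map and convolutions of coalgebra maps are
coalgebra maps; hence `B̃` is a coalgebra map.

For the Rota–Baxter identity, compute in the convolution monoid of linear maps `H ⊗ H → H`, where
`μ ∘ (f ⊗ g) = (f ∘ pr₁) * (g ∘ pr₂)` with `pr₁ (x ⊗ y) = ε(y) x` and `pr₂ (x ⊗ y) = ε(x) y`.
There the descendent product of `B̃` is the coalgebra map `w = pr₁ * β pr₁ * pr₂ * Sβ pr₁`.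
Applying the anti-multiplicative involution `S` turns `w` into the descendent product of `B`
precomposed with `S ⊗ S`, so the identity for `B` gives `β ∘ w = β pr₁ * β pr₂`. Since
`Sβ pr₁ * β pr₁ = (S * id) ∘ β pr₁ = 1`, this yields
`B̃ ∘ w = w * (β ∘ w) = pr₁ * β pr₁ * pr₂ * β pr₂ = B̃ pr₁ * B̃ pr₂ = μ ∘ (B̃ ⊗ B̃)`.
-/

open WithConv
open Coalgebra (comul counit comulCoalgHom counitCoalgHom)
open HopfAlgebra

section TensorProjections

variable {R M N M' N' : Type*} [CommSemiring R]
  [AddCommMonoid M] [Module R M] [Coalgebra R M]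
  [AddCommMonoid N] [Module R N] [Coalgebra R N]
  [AddCommMonoid M'] [Module R M'] [Coalgebra R M']
  [AddCommMonoid N'] [Module R N'] [Coalgebra R N']

namespace CoalgHom

variable (R M N) in
def tensorFst : M ⊗[R] N →ₗc[R] M :=
  (Coalgebra.TensorProduct.rid R R M).toCoalgHom.comp
    (Coalgebra.TensorProduct.map (CoalgHom.id R M) (counitCoalgHom R N))

variable (R M N) in
def tensorSnd : M ⊗[R] N →ₗc[R] N :=
  (Coalgebra.TensorProduct.lid R N).toCoalgHom.comp
    (Coalgebra.TensorProduct.map (counitCoalgHom R M) (CoalgHom.id R N))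

@[simp] lemma tensorFst_tmul (x : M) (y : N) :
    tensorFst R M N (x ⊗ₜ y) = counit (R := R) y • x := rfl

@[simp] lemma tensorSnd_tmul (x : M) (y : N) :
    tensorSnd R M N (x ⊗ₜ y) = counit (R := R) x • y := rfl

lemma tensorFst_comp_comul : (tensorFst R M M).toLinearMap ∘ₗ comul = .id := by
  rw [show (tensorFst R M M).toLinearMap = (TensorProduct.rid R M).toLinearMap ∘ₗ counit.lTensor M
    from rfl, LinearMap.comp_assoc, Coalgebra.lTensor_counit_comp_comul]
  ext; simp

lemma tensorSnd_comp_comul : (tensorSnd R M M).toLinearMap ∘ₗ comul = .id := by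
  rw [show (tensorSnd R M M).toLinearMap = (TensorProduct.lid R M).toLinearMap ∘ₗ counit.rTensor M
    from rfl, LinearMap.comp_assoc, Coalgebra.rTensor_counit_comp_comul]
  ext; simp

lemma tensorFst_comp_map (f : M →ₗ[R] M') {g : N →ₗ[R] N'} (hg : counit ∘ₗ g = counit) :
    (tensorFst R M' N').toLinearMap ∘ₗ map f g = f ∘ₗ (tensorFst R M N).toLinearMap := by
  ext x y
  have h : counit (g y) = counit (R := R) y := congr($hg y)
  simp [h]

lemma tensorSnd_comp_map {f : M →ₗ[R] M'} (hf : counit ∘ₗ f = counit) (g : N →ₗ[R] N') :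
    (tensorSnd R M' N').toLinearMap ∘ₗ map f g = g ∘ₗ (tensorSnd R M N).toLinearMap := by
  ext x y
  have h : counit (f x) = counit (R := R) x := congr($hf x)
  simp [h]

lemma map_tensorFst_tensorSnd_comp_comul :
    map (tensorFst R M N).toLinearMap (tensorSnd R M N).toLinearMap ∘ₗ comul = .id := by
  have h : map (tensorFst R M N).toLinearMap (tensorSnd R M N).toLinearMap ∘ₗ
      (tensorTensorTensorComm R M M N N).toLinearMap =
        map (tensorFst R M M).toLinearMap (tensorSnd R N N).toLinearMap := by
    ext a b c d
    simp [tmul_smul, smul_tmul', smul_smul, mul_comm]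
  rw [TensorProduct.comul_def, AlgebraTensorModule.tensorTensorTensorComm_eq,
    AlgebraTensorModule.map_eq, ← LinearMap.comp_assoc, h, ← map_comp, tensorFst_comp_comul,
    tensorSnd_comp_comul, map_id]

lemma map_tensorSnd_tensorFst_comp_comul :
    map (tensorSnd R M N).toLinearMap (tensorFst R M N).toLinearMap ∘ₗ comul =
      (TensorProduct.comm R M N).toLinearMap := by
  have h : map (tensorSnd R M N).toLinearMap (tensorFst R M N).toLinearMap ∘ₗ
      (tensorTensorTensorComm R M M N N).toLinearMap =
        (TensorProduct.comm R M N).toLinearMap ∘ₗ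
          map (tensorSnd R M M).toLinearMap (tensorFst R N N).toLinearMap := by
    ext a b c d
    simp [tmul_smul, smul_tmul', smul_smul, mul_comm]
  rw [TensorProduct.comul_def, AlgebraTensorModule.tensorTensorTensorComm_eq,
    AlgebraTensorModule.map_eq, ← LinearMap.comp_assoc, h, LinearMap.comp_assoc, ← map_comp,
    tensorFst_comp_comul, tensorSnd_comp_comul, map_id, LinearMap.comp_id]

lemma rTensor_tensorFst_comp_comul :
    (tensorFst R M N).toLinearMap.rTensor (M ⊗[R] N) ∘ₗ comul =
      (TensorProduct.assoc R M M N).toLinearMap ∘ₗ comul.rTensor N := by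
  have h : (tensorFst R M N).toLinearMap.rTensor (M ⊗[R] N) ∘ₗ
      (tensorTensorTensorComm R M M N N).toLinearMap =
        (TensorProduct.assoc R M M N).toLinearMap ∘ₗ (tensorSnd R N N).toLinearMap.lTensor _ := by
    ext a b c d
    simp [smul_tmul']
  rw [TensorProduct.comul_def, AlgebraTensorModule.tensorTensorTensorComm_eq,
    AlgebraTensorModule.map_eq, ← LinearMap.comp_assoc, h, LinearMap.comp_assoc,
    lTensor_comp_map, tensorSnd_comp_comul]
  rfl

end CoalgHom
end TensorProjections

section Convolution

variable {R C A M N : Type*} [CommSemiring R]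
  [AddCommMonoid C] [Module R C] [Coalgebra R C]
  [AddCommMonoid M] [Module R M] [Coalgebra R M]
  [AddCommMonoid N] [Module R N] [Coalgebra R N]

namespace CoalgHom

variable [Coalgebra.IsCocomm R C] [Semiring A] [Bialgebra R A]

def convMul (f g : C →ₗc[R] A) : C →ₗc[R] A :=
  (Bialgebra.mulCoalgHom R A).comp ((Coalgebra.TensorProduct.map f g).comp (comulCoalgHom R C))

end CoalgHom

variable [Semiring A] [Algebra R A]

lemma mul'_comp_map (p : M →ₗ[R] A) (q : N →ₗ[R] A) :
    mul' R A ∘ₗ map p q =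
      (toConv (p ∘ₗ (CoalgHom.tensorFst R M N).toLinearMap) *
        toConv (q ∘ₗ (CoalgHom.tensorSnd R M N).toLinearMap)).ofConv := by
  rw [LinearMap.convMul_def, ofConv_toConv, ofConv_toConv, ofConv_toConv, map_comp,
    LinearMap.comp_assoc, CoalgHom.map_tensorFst_tensorSnd_comp_comul, LinearMap.comp_id]

lemma mul'_comp_map_comp_comm (p : N →ₗ[R] A) (q : M →ₗ[R] A) :
    mul' R A ∘ₗ map p q ∘ₗ (TensorProduct.comm R M N).toLinearMap =
      (toConv (p ∘ₗ (CoalgHom.tensorSnd R M N).toLinearMap) *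
        toConv (q ∘ₗ (CoalgHom.tensorFst R M N).toLinearMap)).ofConv := by
  rw [LinearMap.convMul_def, ofConv_toConv, ofConv_toConv, ofConv_toConv, map_comp,
    LinearMap.comp_assoc, CoalgHom.map_tensorSnd_tensorFst_comp_comul]

end Convolution

namespace HopfAlgebra

variable {R C A : Type*} [CommSemiring R] [Semiring A] [HopfAlgebra R A]

lemma antipode_comp_convMul [AddCommMonoid C] [Module R C] [Coalgebra R C]
    [Coalgebra.IsCocomm R C] (f g : WithConv (C →ₗ[R] A)) :
    antipode R ∘ₗ (f * g).ofConv =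
      (toConv (antipode R ∘ₗ g.ofConv) * toConv (antipode R ∘ₗ f.ofConv)).ofConv := by
  ext x
  have h := congr($(antipode_comp_mul_comp_comm (R := R) (A := A))
    (map g.ofConv f.ofConv (comul x)))
  simp only [comp_apply, LinearEquiv.coe_coe, map_map] at h
  simpa [← map_comm, Coalgebra.comm_comul] using h

lemma map_convOne_convOne :
    map (1 : WithConv (A →ₗ[R] A)).ofConv (1 : WithConv (A →ₗ[R] A)).ofConv =
      (1 : WithConv (A ⊗[R] A →ₗ[R] A ⊗[R] A)).ofConv := by
  ext x y
  simp [Algebra.algebraMap_eq_smul_one, Algebra.TensorProduct.one_def, smul_tmul', mul_smul]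

lemma antipode_comp_mul_self [Semiring C] [HopfAlgebra R C] (φ : C →ₗc[R] A) :
    toConv (antipode R ∘ₗ φ.toLinearMap) * toConv φ.toLinearMap = 1 := by
  have h := convMul_comp_coalgHom_distrib (toConv (antipode R)) (toConv .id) φ
  rw [antipode_mul_id, convOne_comp_coalgHom] at h
  exact (congrArg toConv h).symm

variable [Coalgebra.IsCocomm R A]

/-- In any Hopf algebra `δ ∘ S` is a right convolution inverse of `δ`; cocommutativity makes `δ` a
coalgebra map, which is what makes `(S ⊗ S) ∘ δ` a left inverse. -/
lemma map_antipode_comp_comul :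
    map (antipode R) (antipode R) ∘ₗ comul = comul ∘ₗ antipode R (A := A) := by
  apply toConv_injective
  refine left_inv_eq_right_inv (a := toConv comul) ?_ LinearMap.comul_right_inv
  calc toConv (map (antipode R) (antipode R) ∘ₗ comul) * toConv comul
      = toConv ((toConv (map (antipode R) (antipode R)) * toConv (map .id .id) :
            WithConv (A ⊗[R] A →ₗ[R] A ⊗[R] A)).ofConv ∘ₗ (comulCoalgHom R A).toLinearMap) := by
        rw [convMul_comp_coalgHom_distrib, map_id]; rfl
    _ = toConv ((1 : WithConv (A ⊗[R] A →ₗ[R] A ⊗[R] A)).ofConv ∘ₗ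
          (comulCoalgHom R A).toLinearMap) := by
        rw [← ofConv_toConv (antipode R), ← ofConv_toConv LinearMap.id, map_convMul_map,
          ofConv_toConv, ofConv_toConv, antipode_mul_id, map_convOne_convOne]
    _ = 1 := by rw [convOne_comp_coalgHom]

variable (R A) in
def antipodeCoalgHom : A →ₗc[R] A where
  toLinearMap := antipode R
  counit_comp := counit_comp_antipode
  map_comp_comul := map_antipode_comp_comul

lemma antipode_comp_antipode : antipode R ∘ₗ antipode R = (LinearMap.id : A →ₗ[R] A) := by
  apply toConv_injective
  refine left_inv_eq_right_inv (a := toConv (antipode R)) ?_ antipode_mul_id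
  calc toConv (antipode R ∘ₗ antipode R) * toConv (antipode R)
      = toConv ((toConv (antipode R) * toConv .id : WithConv (A →ₗ[R] A)).ofConv ∘ₗ
          (antipodeCoalgHom R A).toLinearMap) := by
        rw [convMul_comp_coalgHom_distrib]; rfl
    _ = 1 := by rw [antipode_mul_id, convOne_comp_coalgHom]

end HopfAlgebra

section RotaBaxter

variable {R A : Type u} [Field R] [Ring A] [HopfAlgebra R A]

local notation "𝑺" => antipode R (A := A)
local notation "pr₁" => CoalgHom.toLinearMap (CoalgHom.tensorFst R A A)
local notation "pr₂" => CoalgHom.toLinearMap (CoalgHom.tensorSnd R A A)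

lemma wrap_eq_convMul {C : Type u} [AddCommGroup C] [Module R C] [Coalgebra R C]
    (f : C →ₗ[R] A) (g : A →ₗ[R] A) (h : C →ₗ[R] A) :
    wrap f g h = (toConv (f ∘ₗ (CoalgHom.tensorFst R C A).toLinearMap) *
      (toConv (g ∘ₗ (CoalgHom.tensorSnd R C A).toLinearMap) *
        toConv (h ∘ₗ (CoalgHom.tensorFst R C A).toLinearMap))).ofConv := by
  rw [← toConv_ofConv (toConv (g ∘ₗ _) * _), ← mul'_comp_map_comp_comm, LinearMap.convMul_def,
    ofConv_toConv, ofConv_toConv, ← map_comp_rTensor, LinearMap.comp_assoc,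
    CoalgHom.rTensor_tensorFst_comp_comul]
  rfl

lemma Bt_comp_coalgHom {C : Type*} [AddCommMonoid C] [Module R C] [Coalgebra R C]
    (B : A →ₗ[R] A) (φ : C →ₗc[R] A) :
    toConv (Bt B ∘ₗ φ.toLinearMap) = toConv φ.toLinearMap * toConv (B ∘ₗ 𝑺 ∘ₗ φ.toLinearMap) :=
  congrArg toConv (convMul_comp_coalgHom_distrib (toConv .id) (toConv (B ∘ₗ 𝑺)) φ)

lemma mulB_eq_convMul (B : A →ₗ[R] A) :
    mulB B = (toConv (B ∘ₗ pr₁) * (toConv pr₂ * (toConv (𝑺 ∘ₗ B ∘ₗ pr₁) * toConv pr₁))).ofConv := by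
  rw [mulB, wrap_eq_convMul, LinearMap.id_comp]
  congr 3
  exact congrArg toConv
    (convMul_comp_coalgHom_distrib (toConv (𝑺 ∘ₗ B)) (toConv .id) (CoalgHom.tensorFst R A A))

section Cocommutative

variable [Coalgebra.IsCocomm R A]

lemma antipode_comp_Bt_convMul_id (B : A →ₗ[R] A) :
    toConv (𝑺 ∘ₗ Bt B) * toConv .id = toConv (𝑺 ∘ₗ B ∘ₗ 𝑺) := by
  have h : 𝑺 ∘ₗ Bt B = (toConv (𝑺 ∘ₗ B ∘ₗ 𝑺) * toConv 𝑺).ofConv :=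
    antipode_comp_convMul (toConv .id) (toConv (B ∘ₗ 𝑺))
  rw [h, toConv_ofConv, mul_assoc, antipode_mul_id, mul_one]

lemma mulB_Bt_eq_convMul (B : A →ₗ[R] A) :
    mulB (Bt B) = (toConv pr₁ * toConv (B ∘ₗ 𝑺 ∘ₗ pr₁) * toConv pr₂ *
      toConv (𝑺 ∘ₗ B ∘ₗ 𝑺 ∘ₗ pr₁)).ofConv := by
  have h : toConv (𝑺 ∘ₗ Bt B ∘ₗ pr₁) * toConv pr₁ = toConv (𝑺 ∘ₗ B ∘ₗ 𝑺 ∘ₗ pr₁) := by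
    have h := convMul_comp_coalgHom_distrib (toConv (𝑺 ∘ₗ Bt B)) (toConv .id)
      (CoalgHom.tensorFst R A A)
    rw [antipode_comp_Bt_convMul_id] at h
    exact (congrArg toConv h).symm
  rw [mulB_eq_convMul, Bt_comp_coalgHom, h]
  simp only [mul_assoc]

lemma antipode_comp_mulB_Bt (B : A →ₗ[R] A) :
    𝑺 ∘ₗ mulB (Bt B) = mulB B ∘ₗ map 𝑺 𝑺 := by
  have hS : map 𝑺 𝑺 = (Coalgebra.TensorProduct.map (antipodeCoalgHom R A)
      (antipodeCoalgHom R A)).toLinearMap := rfl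
  rw [mulB_Bt_eq_convMul, mulB_eq_convMul, hS]
  simp only [convMul_comp_coalgHom_distrib, antipode_comp_convMul, toConv_ofConv,
    LinearMap.comp_assoc]
  rw [← hS, CoalgHom.tensorFst_comp_map _ counit_comp_antipode,
    CoalgHom.tensorSnd_comp_map counit_comp_antipode, ← LinearMap.comp_assoc _ 𝑺 𝑺,
    antipode_comp_antipode, LinearMap.id_comp]

lemma comp_antipode_comp_mulB_Bt {B : A →ₗ[R] A} (hB : mul' R A ∘ₗ map B B = B ∘ₗ mulB B) :
    B ∘ₗ 𝑺 ∘ₗ mulB (Bt B) = mul' R A ∘ₗ map (B ∘ₗ 𝑺) (B ∘ₗ 𝑺) := by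
  rw [antipode_comp_mulB_Bt, ← LinearMap.comp_assoc, ← hB, LinearMap.comp_assoc, map_comp]

/-- Its underlying linear map is `Bt B.toLinearMap` by definition. -/
def btCoalgHom (B : A →ₗc[R] A) : A →ₗc[R] A :=
  (CoalgHom.id R A).convMul (B.comp (antipodeCoalgHom R A))

def mulBtCoalgHom (B : A →ₗc[R] A) : A ⊗[R] A →ₗc[R] A :=
  (((CoalgHom.tensorFst R A A).convMul
    ((B.comp (antipodeCoalgHom R A)).comp (CoalgHom.tensorFst R A A))).convMul
      (CoalgHom.tensorSnd R A A)).convMul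
        (((antipodeCoalgHom R A).comp (B.comp (antipodeCoalgHom R A))).comp
          (CoalgHom.tensorFst R A A))

lemma toLinearMap_mulBtCoalgHom (B : A →ₗc[R] A) :
    (mulBtCoalgHom B).toLinearMap = mulB (Bt B.toLinearMap) :=
  (mulB_Bt_eq_convMul B.toLinearMap).symm

lemma mul'_comp_map_Bt {B : A →ₗc[R] A}
    (hB : mul' R A ∘ₗ map B.toLinearMap B.toLinearMap = B.toLinearMap ∘ₗ mulB B.toLinearMap) :
    mul' R A ∘ₗ map (Bt B.toLinearMap) (Bt B.toLinearMap) =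
      Bt B.toLinearMap ∘ₗ mulB (Bt B.toLinearMap) := by
  have hcancel : toConv (𝑺 ∘ₗ B.toLinearMap ∘ₗ 𝑺 ∘ₗ pr₁) * toConv (B.toLinearMap ∘ₗ 𝑺 ∘ₗ pr₁) = 1 :=
    antipode_comp_mul_self ((B.comp (antipodeCoalgHom R A)).comp (CoalgHom.tensorFst R A A))
  calc mul' R A ∘ₗ map (Bt B.toLinearMap) (Bt B.toLinearMap)
      = (toConv pr₁ * toConv (B.toLinearMap ∘ₗ 𝑺 ∘ₗ pr₁) *
          (toConv pr₂ * toConv (B.toLinearMap ∘ₗ 𝑺 ∘ₗ pr₂))).ofConv := by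
        rw [mul'_comp_map, Bt_comp_coalgHom, Bt_comp_coalgHom]
    _ = (toConv pr₁ * toConv (B.toLinearMap ∘ₗ 𝑺 ∘ₗ pr₁) * toConv pr₂ *
          (toConv (𝑺 ∘ₗ B.toLinearMap ∘ₗ 𝑺 ∘ₗ pr₁) * toConv (B.toLinearMap ∘ₗ 𝑺 ∘ₗ pr₁)) *
            toConv (B.toLinearMap ∘ₗ 𝑺 ∘ₗ pr₂)).ofConv := by
        rw [hcancel, mul_one]
        simp only [mul_assoc]
    _ = (toConv (mulB (Bt B.toLinearMap)) *
          toConv (B.toLinearMap ∘ₗ 𝑺 ∘ₗ mulB (Bt B.toLinearMap))).ofConv := by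
        rw [comp_antipode_comp_mulB_Bt hB, mul'_comp_map, mulB_Bt_eq_convMul]
        simp only [toConv_ofConv, mul_assoc, LinearMap.comp_assoc]
    _ = Bt B.toLinearMap ∘ₗ mulB (Bt B.toLinearMap) := by
        rw [← toLinearMap_mulBtCoalgHom]
        exact congrArg ofConv (Bt_comp_coalgHom _ _).symm

end Cocommutative

end RotaBaxter

/-- `B̃ = Bt B` is again a Rota–Baxter operator of weight `-1` on `H`. -/
theorem stmt0 (B : H →ₗ[K] H) (hcc : IsCocomm K H) (hB : IsRotaBaxter B) :
    IsRotaBaxter (Bt B) := by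
  have : Coalgebra.IsCocomm K H := ⟨LinearMap.ext hcc⟩
  let Bc : H →ₗc[K] H := ⟨B, hB.2.1, hB.1.symm⟩
  have hRB : mul' K H ∘ₗ map B B = B ∘ₗ mulB B := TensorProduct.ext' hB.2.2
  refine ⟨(btCoalgHom Bc).map_comp_comul.symm, (btCoalgHom Bc).counit_comp, fun x y => ?_⟩
  exact congr($(mul'_comp_map_Bt (B := Bc) hRB) (x ⊗ₜ y))

end
end

section
/- Let (H, B) be a Rota–Baxter Hopf algebra of weight −1 and let H_B = (H, *_B, 1, Δ, ε, S_B) be its descendent Hopf algebra, where x *_B y = B(x₁) y S(B(x₂)) x₃ and S_B(x) = S(B(x₁)) S(x₂) B(x₃). Then B is a Rota–Baxter operator of weight −1 on H_B; that is, for all x, y ∈ H one has B(x) *_B B(y) = B(((B(x₁) *_B y) *_B S_B(B(x₂))) *_B x₃). -/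
open TensorProduct LinearMap

noncomputable section

universe u

variable {K H : Type u} [Field K] [CharZero K] [Ring H] [HopfAlgebra K H]

/-!
Since `B` is a coalgebra map, precomposition with `B` distributes over the convolution product,
and the Rota–Baxter identity says `B ∘ *_B = m ∘ (B ⊗ B)`. By cocommutativity,
`x₁ *_B S_B(x₂) = ε(x) 1`, so `B ∘ S_B` is a right convolution inverse of `B`; it therefore
equals the left inverse `S ∘ B`. With these rules both sides of the identity reduce to the
convolution `B(B(x₁)) B(y) S(B(B(x₂))) B(x₃)`.
-/

open Coalgebra (comul)
open WithConv

section

variable {K H : Type u} [Field K] [Ring H] [HopfAlgebra K H]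

section Coalgebra

variable {C : Type u} [AddCommGroup C] [Module K C] [Coalgebra K C]

lemma toConv_conv (f g : C →ₗ[K] H) : toConv (conv f g) = toConv f * toConv g := rfl

lemma wrap_tmul (f : C →ₗ[K] H) (g : H →ₗ[K] H) (h : C →ₗ[K] H) (a : C) (c : H) :
    wrap f g h (a ⊗ₜ c) = conv (mulRight K (g c) ∘ₗ f) h a := by
  simp only [wrap, conv, comp_apply, map_tmul, id_coe, id_eq]
  induction comul (R := K) a with
  | zero => simp
  | tmul p q => simp [mul_assoc]
  | add s t hs ht => simp only [add_tmul, map_add, hs, ht]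

lemma wrap_comp_map_comul [Coalgebra.IsCocomm K C] (f h : C →ₗ[K] H) (g : H →ₗ[K] H)
    (k : C →ₗ[K] H) :
    wrap f g h ∘ₗ map LinearMap.id k ∘ₗ comul = conv f (conv (g ∘ₗ k) h) := by
  simp only [wrap, conv, coassoc_simps]

end Coalgebra

lemma IsCocomm.toCoalgebraIsCocomm (hcc : IsCocomm K H) : Coalgebra.IsCocomm K H :=
  ⟨LinearMap.ext hcc⟩

lemma mulB_tmul (B : H →ₗ[K] H) (a c : H) :
    mulB B (a ⊗ₜ c) = conv (conv (mulRight K c ∘ₗ B) (aS K H ∘ₗ B)) LinearMap.id a := by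
  rw [mulB, wrap_tmul, id_apply]
  congr 1
  exact toConv_injective (mul_assoc _ _ _).symm

namespace IsRotaBaxter

variable {B : H →ₗ[K] H} (hB : IsRotaBaxter B)
include hB

def toCoalgHom : H →ₗc[K] H where
  toLinearMap := B
  counit_comp := hB.2.1
  map_comp_comul := hB.1.symm

lemma map_mul_map (a c : H) : B a * B c = B (mulB B (a ⊗ₜ c)) :=
  hB.2.2 a c

lemma conv_comp (f g : H →ₗ[K] H) : conv f g ∘ₗ B = conv (f ∘ₗ B) (g ∘ₗ B) :=
  convMul_comp_coalgHom_distrib (toConv f) (toConv g) hB.toCoalgHom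

lemma convOne_comp :
    (1 : WithConv (H →ₗ[K] H)).ofConv ∘ₗ B = (1 : WithConv (H →ₗ[K] H)).ofConv := by
  rw [LinearMap.convOne_def, ofConv_toConv, comp_assoc, hB.2.1]

lemma mul_antipode_comp : toConv B * toConv (aS K H ∘ₗ B) = 1 :=
  calc toConv B * toConv (aS K H ∘ₗ B) = toConv (conv LinearMap.id (aS K H) ∘ₗ B) := by
        rw [hB.conv_comp]; rfl
    _ = toConv ((1 : WithConv (H →ₗ[K] H)).ofConv ∘ₗ B) := by
        rw [← LinearMap.id_mul_antipode]; rfl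
    _ = 1 := by rw [hB.convOne_comp]

lemma antipode_comp_mul : toConv (aS K H ∘ₗ B) * toConv B = 1 :=
  calc toConv (aS K H ∘ₗ B) * toConv B = toConv (conv (aS K H) LinearMap.id ∘ₗ B) := by
        rw [hB.conv_comp]; rfl
    _ = toConv ((1 : WithConv (H →ₗ[K] H)).ofConv ∘ₗ B) := by
        rw [← LinearMap.antipode_mul_id]; rfl
    _ = 1 := by rw [hB.convOne_comp]

lemma mulB_tmul_one (a : H) : mulB B (a ⊗ₜ 1) = a := by
  rw [mulB_tmul, mulRight_one, LinearMap.id_comp]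
  have h : conv (conv B (aS K H ∘ₗ B)) LinearMap.id = LinearMap.id :=
    toConv_injective (by rw [toConv_conv, toConv_conv, hB.mul_antipode_comp, one_mul])
  rw [h, id_apply]

lemma map_one : B 1 = 1 := by
  have hunit : IsUnit (B 1) := (IsGroupLikeElem.one.map hB.toCoalgHom).isUnit
  refine (hunit.mul_eq_left).mp ?_
  rw [hB.map_mul_map, hB.mulB_tmul_one]

lemma comp_mulB : B ∘ₗ mulB B = mul' K H ∘ₗ map B B :=
  TensorProduct.ext' fun a c => (hB.map_mul_map a c).symm

lemma comp_mulB_comp_map_comul (f g : H →ₗ[K] H) :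
    B ∘ₗ (mulB B ∘ₗ map f g ∘ₗ comul) = conv (B ∘ₗ f) (B ∘ₗ g) := by
  rw [← comp_assoc, hB.comp_mulB, comp_assoc, ← comp_assoc comul (map f g) (map B B),
    ← map_comp]
  rfl

lemma comp_convOne :
    B ∘ₗ (1 : WithConv (H →ₗ[K] H)).ofConv = (1 : WithConv (H →ₗ[K] H)).ofConv := by
  ext x
  simp [Algebra.algebraMap_eq_smul_one, hB.map_one]

lemma mulB_comp_map_SB_comul [Coalgebra.IsCocomm K H] :
    toConv (mulB B ∘ₗ map LinearMap.id (SB B) ∘ₗ comul) = 1 :=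
  calc toConv (mulB B ∘ₗ map LinearMap.id (SB B) ∘ₗ comul)
      = toConv B * (toConv (aS K H ∘ₗ B) * (toConv (aS K H) * toConv B) *
          (toConv (aS K H ∘ₗ B) * toConv LinearMap.id)) := by
        rw [mulB, wrap_comp_map_comul]; rfl
    _ = toConv B * toConv (aS K H ∘ₗ B) * toConv (aS K H) *
          (toConv B * toConv (aS K H ∘ₗ B)) * toConv LinearMap.id := by
        simp only [mul_assoc]
    _ = 1 := by
        rw [hB.mul_antipode_comp, one_mul, mul_one, ← LinearMap.antipode_mul_id]; rfl

lemma mul_comp_SB [Coalgebra.IsCocomm K H] : toConv B * toConv (B ∘ₗ SB B) = 1 := by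
  have h := hB.comp_mulB_comp_map_comul LinearMap.id (SB B)
  rw [comp_id] at h
  rw [← toConv_conv, ← h, ← ofConv_toConv (mulB B ∘ₗ _), hB.mulB_comp_map_SB_comul,
    hB.comp_convOne]

lemma comp_SB [Coalgebra.IsCocomm K H] : B ∘ₗ SB B = aS K H ∘ₗ B :=
  toConv_injective (left_inv_eq_right_inv hB.antipode_comp_mul hB.mul_comp_SB).symm

end IsRotaBaxter
end

/-- `B` is a Rota–Baxter operator of weight `-1` on the descendent Hopf algebra:
`B(x) *_B B(y) = B(((B(x₁) *_B y) *_B S_B(B(x₂))) *_B x₃)`. -/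
theorem stmt3 (B : H →ₗ[K] H) (hcc : IsCocomm K H) (hB : IsRotaBaxter B) :
    ∀ x y : H,
      mulB B (B x ⊗ₜ[K] B y) =
        B ((mulB B ∘ₗ
            TensorProduct.map
              (mulB B ∘ₗ
                TensorProduct.map
                  (mulB B ∘ₗ (TensorProduct.mk K H H).flip y ∘ₗ B)
                  (SB B ∘ₗ B) ∘ₗ Coalgebra.comul)
              LinearMap.id ∘ₗ Coalgebra.comul) x) := by
  have : Coalgebra.IsCocomm K H := hcc.toCoalgebraIsCocomm
  intro x y
  have hRB : B ∘ₗ (mulB B ∘ₗ (TensorProduct.mk K H H).flip y ∘ₗ B) =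
      mulRight K (B y) ∘ₗ B ∘ₗ B :=
    LinearMap.ext fun z => (hB.map_mul_map (B z) y).symm
  calc mulB B (B x ⊗ₜ[K] B y)
      = conv (conv (mulRight K (B y) ∘ₗ B ∘ₗ B) (aS K H ∘ₗ B ∘ₗ B)) B x := by
        rw [mulB_tmul, ← comp_apply (g := B), hB.conv_comp, hB.conv_comp]; rfl
    _ = _ := by
        rw [← comp_apply (f := B), hB.comp_mulB_comp_map_comul, hB.comp_mulB_comp_map_comul,
          hRB, ← comp_assoc B (SB B) B, hB.comp_SB]; rfl

end
end

section
/- Let (H, B) be a Rota–Baxter Hopf algebra of weight −1 and define B̃ : H → H by B̃(x) = x₁ B(S(x₂)). Then for all x ∈ H the following two identities hold: B̃(x₁) S(B(S(x₂))) = x and B(x₁) S(B̃(S(x₂))) = x. -/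
open TensorProduct LinearMap

noncomputable section

universe u

variable {K H : Type u} [Field K] [CharZero K] [Ring H] [HopfAlgebra K H]

/-!
Work in the convolution algebra of linear endomorphisms of `H`. A coalgebra map `φ` has
convolution inverse `S ∘ φ`, and precomposition with a coalgebra map is multiplicative for
convolution. Cocommutativity makes `S` an involutive coalgebra map satisfying
`S ∘ (f * g) = (S ∘ g) * (S ∘ f)`. Since `B̃ = id * (B ∘ S)`, both identities then reduce to
`B * (S ∘ B) = 1` (precomposed with `S` for the first one).
-/

open WithConv HopfAlgebra

section Convolution

variable {R A C : Type*} [CommSemiring R] [Semiring A] [HopfAlgebra R A]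
  [AddCommMonoid C] [Module R C] [Coalgebra R C]

lemma LinearMap.coalgHom_mul_antipode_comp (φ : C →ₗc[R] A) :
    toConv (φ : C →ₗ[R] A) * toConv (antipode R ∘ₗ (φ : C →ₗ[R] A)) = 1 := by
  have h := LinearMap.convMul_comp_coalgHom_distrib (toConv LinearMap.id)
    (toConv (antipode R (A := A))) φ
  rw [LinearMap.id_mul_antipode] at h
  apply WithConv.ofConv_injective
  convert h.symm using 1 <;> ext c <;> simp

lemma HopfAlgebra.antipode_comp_convOne :
    antipode R ∘ₗ (1 : WithConv (C →ₗ[R] A)).ofConv = (1 : WithConv (C →ₗ[R] A)).ofConv := by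
  ext c
  simp [Algebra.algebraMap_eq_smul_one]

variable [Coalgebra.IsCocomm R C]

lemma HopfAlgebra.antipode_comp_convMul_s4 (f g : C →ₗ[R] A) :
    antipode R ∘ₗ (toConv f * toConv g).ofConv =
      (toConv (antipode R ∘ₗ g) * toConv (antipode R ∘ₗ f)).ofConv := by
  simp only [LinearMap.convMul_def, ofConv_toConv]
  calc antipode R ∘ₗ LinearMap.mul' R A ∘ₗ TensorProduct.map f g ∘ₗ Coalgebra.comul
      = antipode R ∘ₗ LinearMap.mul' R A ∘ₗ TensorProduct.map f g ∘ₗ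
          (TensorProduct.comm R C C).toLinearMap ∘ₗ Coalgebra.comul := by
        rw [Coalgebra.comm_comp_comul]
    _ = (antipode R ∘ₗ LinearMap.mul' R A ∘ₗ (TensorProduct.comm R A A).toLinearMap) ∘ₗ
          TensorProduct.map g f ∘ₗ Coalgebra.comul := by
        rw [← LinearMap.comp_assoc _ (TensorProduct.comm R C C).toLinearMap, map_comp_comm_eq]
        simp only [LinearMap.comp_assoc]
    _ = LinearMap.mul' R A ∘ₗ TensorProduct.map (antipode R ∘ₗ g) (antipode R ∘ₗ f) ∘ₗ
          Coalgebra.comul := by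
        rw [antipode_comp_mul_comp_comm, TensorProduct.map_comp]
        simp only [LinearMap.comp_assoc]

end Convolution

section Cocommutative

variable {R A : Type*} [CommSemiring R] [Semiring A] [HopfAlgebra R A] [Coalgebra.IsCocomm R A]

/- `δ ∘ S` is a right convolution inverse of `δ`. Cocommutativity makes `δ` a coalgebra map, so
`((S ⊗ S) ∘ δ) * δ = ((S ⊗ S) * (id ⊗ id)) ∘ δ = ((S * id) ⊗ (S * id)) ∘ δ = 1`: it is also
a left inverse. -/
lemma HopfAlgebra.comul_comp_antipode :
    Coalgebra.comul ∘ₗ antipode R = TensorProduct.map (antipode R) (antipode R) ∘ₗ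
      (Coalgebra.comul : A →ₗ[R] A ⊗[R] A) := by
  have hleft : toConv (TensorProduct.map (antipode R) (antipode R) ∘ₗ
      (Coalgebra.comul : A →ₗ[R] A ⊗[R] A)) * toConv Coalgebra.comul = 1 := by
    calc _ = toConv ((toConv (TensorProduct.map (antipode R) (antipode R)) *
            toConv (TensorProduct.map (LinearMap.id : A →ₗ[R] A) LinearMap.id) :
              WithConv (A ⊗[R] A →ₗ[R] A ⊗[R] A)).ofConv ∘ₗ
              (Coalgebra.comulCoalgHom R A).toLinearMap) := by
          rw [LinearMap.convMul_comp_coalgHom_distrib]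
          simp only [TensorProduct.map_id, LinearMap.id_comp]
          rfl
      _ = toConv ((toConv (TensorProduct.map
            (toConv (antipode R (A := A)) * toConv LinearMap.id).ofConv
            (toConv (antipode R (A := A)) * toConv LinearMap.id).ofConv)).ofConv ∘ₗ
              (Coalgebra.comulCoalgHom R A).toLinearMap) := by
          rw [← TensorProduct.map_convMul_map]
      _ = 1 := by
          have hone : TensorProduct.map (1 : WithConv (A →ₗ[R] A)).ofConv
              (1 : WithConv (A →ₗ[R] A)).ofConv =
                (1 : WithConv (A ⊗[R] A →ₗ[R] A ⊗[R] A)).ofConv := by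
            ext
            simp [Algebra.algebraMap_eq_smul_one, TensorProduct.smul_tmul', smul_smul,
              Algebra.TensorProduct.one_def, mul_comm]
          rw [LinearMap.antipode_mul_id, ofConv_toConv, hone]
          ext a
          simp
  exact congr(ofConv $((left_inv_eq_right_inv hleft LinearMap.comul_right_inv).symm))

lemma HopfAlgebra.antipode_comp_antipode_s4 :
    antipode R ∘ₗ antipode R = (LinearMap.id : A →ₗ[R] A) := by
  have hleft : toConv (antipode R ∘ₗ antipode R) * toConv (antipode R ∘ₗ LinearMap.id) =
      (1 : WithConv (A →ₗ[R] A)) := by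
    apply WithConv.ofConv_injective
    rw [← antipode_comp_convMul_s4, LinearMap.id_mul_antipode, antipode_comp_convOne]
  rw [LinearMap.comp_id] at hleft
  exact congr(ofConv $(left_inv_eq_right_inv hleft LinearMap.antipode_mul_id))

variable (R A) in
def HopfAlgebra.antipodeCoalgHom_s4 : A →ₗc[R] A where
  toLinearMap := antipode R
  counit_comp := counit_comp_antipode
  map_comp_comul := comul_comp_antipode.symm

lemma LinearMap.convMul_comp_antipode (f g : A →ₗ[R] A) :
    (toConv f * toConv g).ofConv ∘ₗ antipode R =
      (toConv (f ∘ₗ antipode R) * toConv (g ∘ₗ antipode R)).ofConv :=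
  LinearMap.convMul_comp_coalgHom_distrib (toConv f) (toConv g) (antipodeCoalgHom_s4 R A)

/-- The operator `B̃` of the paper: `tilde f x = x₁ f(S x₂)`. -/
def HopfAlgebra.tilde (f : A →ₗ[R] A) : A →ₗ[R] A :=
  (toConv LinearMap.id * toConv (f ∘ₗ antipode R)).ofConv

lemma HopfAlgebra.antipode_comp_tilde_comp_antipode (f : A →ₗ[R] A) :
    antipode R ∘ₗ tilde f ∘ₗ antipode R =
      (toConv (antipode R ∘ₗ f) * toConv LinearMap.id).ofConv := by
  rw [tilde, ← LinearMap.comp_assoc, antipode_comp_convMul_s4, LinearMap.convMul_comp_antipode]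
  simp only [LinearMap.comp_id, LinearMap.comp_assoc, antipode_comp_antipode_s4]

variable (φ : A →ₗc[R] A)

lemma HopfAlgebra.tilde_mul_antipode_comp_comp_antipode :
    toConv (tilde (φ : A →ₗ[R] A)) * toConv (antipode R ∘ₗ (φ : A →ₗ[R] A) ∘ₗ antipode R) =
      toConv LinearMap.id := by
  have hinv : toConv ((φ : A →ₗ[R] A) ∘ₗ antipode R) *
      toConv (antipode R ∘ₗ (φ : A →ₗ[R] A) ∘ₗ antipode R) = 1 := by
    apply WithConv.ofConv_injective
    rw [← LinearMap.comp_assoc, ← LinearMap.convMul_comp_antipode,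
      LinearMap.coalgHom_mul_antipode_comp]
    ext a
    simp
  rw [tilde, toConv_ofConv, mul_assoc, hinv, mul_one]

lemma HopfAlgebra.coalgHom_mul_antipode_comp_tilde_comp_antipode :
    toConv (φ : A →ₗ[R] A) * toConv (antipode R ∘ₗ tilde (φ : A →ₗ[R] A) ∘ₗ antipode R) =
      toConv LinearMap.id := by
  rw [antipode_comp_tilde_comp_antipode, toConv_ofConv, ← mul_assoc,
    LinearMap.coalgHom_mul_antipode_comp, one_mul]

end Cocommutative

/-- `B̃(x₁) S(B(S(x₂))) = x` and `B(x₁) S(B̃(S(x₂))) = x`. -/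
theorem stmt4 (B : H →ₗ[K] H) (hcc : IsCocomm K H) (hB : IsRotaBaxter B) :
    ∀ x : H, conv (Bt B) (aS K H ∘ₗ B ∘ₗ aS K H) x = x ∧ conv B (aS K H ∘ₗ Bt B ∘ₗ aS K H) x = x := by
  have : Coalgebra.IsCocomm K H := ⟨LinearMap.ext hcc⟩
  let φ : H →ₗc[K] H := ⟨B, hB.2.1, hB.1.symm⟩
  intro x
  exact ⟨congr(ofConv $(tilde_mul_antipode_comp_comp_antipode φ) x),
    congr(ofConv $(coalgHom_mul_antipode_comp_tilde_comp_antipode φ) x)⟩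
end
end
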